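/- (Theorem 3, essential content) Under the hypotheses of Lemma 3 (connected communication graph, existence of an extreme agent, and \bar π_j(k) > ε for every follower j and every k ∈ {1,…,δ}), for any weights w_1,…,w_f > 0, any constants η_1,…,η_f > 0, and any velocity vector v ∈ ℝ^{nm}, define ψ_{c,1}(p,v) = ∇_p h_{r,c}(p)·v + η_c h_{r,c}(p). Then Σ_{c=1}^f w_c e^{−w_c ψ_{c,1}(p,v)} ∇_p h_{r,c}(p) ≠ 0 in ℝ^{nm}. (This is the condition making the composed function φ_r(x,w) = 1 − Σ_c e^{−w_c ψ_{c,1}(x)} a valid CBF of relative degree 1 for the double-integrator system with unbounded inputs.) -/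

import Mathlib

open scoped BigOperators

/-- The parametrized sigmoid function σ_{s,q}(y) = (1+q)/(1 + q⁻¹ e^{-s y}) − q. -/
noncomputable def sigmaFn (s q y : ℝ) : ℝ :=
  (1 + q) / (1 + q⁻¹ * Real.exp (-(s * y))) - q

/-- Squared inter-robot distance `Δ_{ij}² = ∑_b (p_{ib} − p_{jb})²`. -/
noncomputable def dsq {n m : ℕ} (p : Fin n → Fin m → ℝ) (i j : Fin n) : ℝ :=
  ∑ b, (p i b - p j b) ^ 2

/-- Smoothed adjacency entry: `σ_{s_A,q_A}((R² − Δ_{ij}²)³)` if `i ≠ j` and `Δ_{ij} < R`,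
and `0` otherwise. -/
noncomputable def barAdj (sA qA R : ℝ) {n m : ℕ} (p : Fin n → Fin m → ℝ)
    (i j : Fin n) : ℝ :=
  if i ≠ j ∧ dsq p i j < R ^ 2 then sigmaFn sA qA ((R ^ 2 - dsq p i j) ^ 3) else 0

/-- Smoothed bootstrap-percolation values: leaders `j < l` are pinned at `1`; each follower
`j` updates via `σ_{s,q}(∑_i \bar a_{ij} ⋅ \bar π_i(k) − r)` (leaders contributing
`\bar a_{ij} ⋅ 1`). -/
noncomputable def piBar (s q sA qA R : ℝ) (l r : ℕ) {n m : ℕ} : ℕ → (Fin n → Fin m → ℝ) → Fin n → ℝ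
  | 0 => fun _ j => if (j : ℕ) < l then 1 else 0
  | k + 1 => fun p j =>
      if (j : ℕ) < l then 1
      else sigmaFn s q ((∑ i, barAdj sA qA R p i j * piBar s q sA qA R l r k p i) - r)

/-- The candidate barrier function for follower `j`: `h(p) = \bar π_j(δ)(p) − ε`. -/
noncomputable def hBarrier (s q sA qA R ε : ℝ) (l r δ : ℕ) {n m : ℕ} (j : Fin n)
    (p : Fin n → Fin m → ℝ) : ℝ :=
  piBar s q sA qA R l r δ p j - ε

/-- The unit coordinate direction of agent `I`, dimension `b`, in the stacked position space. -/
def coordDir {n m : ℕ} (I : Fin n) (b : Fin m) : Fin n → Fin m → ℝ :=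
  fun i d => if i = I ∧ d = b then 1 else 0

/-- The distance-based communication graph on positions `p`. -/
def commGraph (R : ℝ) {n m : ℕ} (p : Fin n → Fin m → ℝ) : SimpleGraph (Fin n) :=
  SimpleGraph.fromRel (fun i j => dsq p i j < R ^ 2)

/-- Agent `I` is an extreme agent at dimension `b`: its `b`-th position component is
strictly largest or strictly smallest among all agents. -/
def IsExtremeAgent {n m : ℕ} (p : Fin n → Fin m → ℝ) (I : Fin n) (b : Fin m) : Prop :=
  (∀ j : Fin n, j ≠ I → p j b < p I b) ∨ (∀ j : Fin n, j ≠ I → p I b < p j b)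

/-!
Differentiate along the radial direction `p` itself. Squared distances are 2-homogeneous, so
their derivative along `p` is `2 Δ_{ij}² ≥ 0`; the smoothed adjacency is a nonincreasing
function of `Δ_{ij}²`, strictly decreasing below `R²`, so its derivative along `p` is `≤ 0`,
and `< 0` for agents at positive distance less than `R`. As the BP values up to step `δ` are
nonnegative, the recursion propagates this: every `∇h_{r,c} · p ≤ 0`. Connectivity, together
with the extreme agent (which forbids all agents sharing one position), produces a follower `j`
and an agent `i` at positive in-range distance with `\bar π_i(δ - 1) > 0`, and then
`∇h_{r,j} · p < 0`. Evaluating the positively weighted sum at `p` gives a negative number.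
-/

open Finset Real

section Sigmoid

variable {s q : ℝ}

lemma sigmaFn_zero (hq : 0 < q) : sigmaFn s q 0 = 0 := by
  have := hq.ne'
  rw [sigmaFn, mul_zero, neg_zero, exp_zero, mul_one, sub_eq_zero, div_eq_iff (by positivity)]
  field_simp
  ring

lemma hasDerivAt_sigmaFn (hq : 0 < q) (y : ℝ) :
    HasDerivAt (sigmaFn s q)
      ((1 + q) * (q⁻¹ * s * exp (-(s * y))) / (1 + q⁻¹ * exp (-(s * y))) ^ 2) y := by
  have hden : HasDerivAt (fun y => 1 + q⁻¹ * exp (-(s * y)))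
      (q⁻¹ * (exp (-(s * y)) * -(s * 1))) y :=
    ((((hasDerivAt_id y).const_mul s).neg.exp).const_mul q⁻¹).const_add 1
  exact (((hasDerivAt_const y (1 + q)).div hden (by positivity)).sub_const q).congr_deriv
    (by ring)

lemma deriv_sigmaFn_pos (hs : 0 < s) (hq : 0 < q) (y : ℝ) : 0 < deriv (sigmaFn s q) y := by
  rw [(hasDerivAt_sigmaFn hq y).deriv]
  positivity

lemma differentiable_sigmaFn (hq : 0 < q) : Differentiable ℝ (sigmaFn s q) :=
  fun y => (hasDerivAt_sigmaFn hq y).differentiableAt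

lemma strictMono_sigmaFn (hs : 0 < s) (hq : 0 < q) : StrictMono (sigmaFn s q) :=
  strictMono_of_deriv_pos (deriv_sigmaFn_pos hs hq)

lemma sigmaFn_nonneg (hs : 0 < s) (hq : 0 < q) {y : ℝ} (hy : 0 ≤ y) : 0 ≤ sigmaFn s q y :=
  sigmaFn_zero hq ▸ (strictMono_sigmaFn hs hq).monotone hy

lemma pos_of_sigmaFn_pos (hs : 0 < s) (hq : 0 < q) {y : ℝ} (h : 0 < sigmaFn s q y) : 0 < y :=
  (strictMono_sigmaFn hs hq).lt_iff_lt.1 (by rwa [sigmaFn_zero hq])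

end Sigmoid

lemma hasDerivAt_max_zero_pow_three (y : ℝ) :
    HasDerivAt (fun x : ℝ => max x 0 ^ 3) (3 * max y 0 ^ 2) y := by
  rcases lt_trichotomy y 0 with hy | rfl | hy
  · rw [max_eq_right hy.le]
    refine ((hasDerivAt_const y (0 : ℝ)).congr_of_eventuallyEq ?_).congr_deriv (by ring)
    filter_upwards [Iio_mem_nhds hy] with x hx
    simp [max_eq_right (Set.mem_Iio.1 hx).le]
  · have hleft :
        HasDerivWithinAt (fun x : ℝ => max x 0 ^ 3) (3 * max 0 0 ^ 2) (Set.Iic 0) 0 := by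
      refine ((hasDerivWithinAt_const 0 _ 0).congr (fun x hx => ?_) (by simp)).congr_deriv
        (by simp)
      simp [max_eq_right (Set.mem_Iic.1 hx)]
    have hright :
        HasDerivWithinAt (fun x : ℝ => max x 0 ^ 3) (3 * max 0 0 ^ 2) (Set.Ici 0) 0 := by
      refine ((hasDerivAt_pow 3 0).hasDerivWithinAt.congr (fun x hx => ?_) (by simp)).congr_deriv
        (by simp)
      simp [max_eq_left (Set.mem_Ici.1 hx)]
    simpa using (hleft.union hright).hasDerivAt (by simp)
  · rw [max_eq_left hy.le]
    refine ((hasDerivAt_pow 3 y).congr_of_eventuallyEq ?_).congr_deriv (by ring)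
    filter_upwards [Ioi_mem_nhds hy] with x hx
    simp [max_eq_left (Set.mem_Ioi.1 hx).le]

lemma fderiv_apply_self_of_homogeneous {E : Type*} [NormedAddCommGroup E] [NormedSpace ℝ E]
    {f : E → ℝ} {x : E} (hf : DifferentiableAt ℝ f x) {k : ℕ}
    (hhom : ∀ t : ℝ, f (t • x) = t ^ k * f x) : fderiv ℝ f x x = k * f x := by
  have hline : HasDerivAt (fun t : ℝ => t • x) x 1 := by
    simpa using (hasDerivAt_id (1 : ℝ)).smul_const x
  have h1 : HasDerivAt (fun t : ℝ => f (t • x)) (fderiv ℝ f x x) 1 := by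
    have hf' : HasFDerivAt f (fderiv ℝ f x) ((1 : ℝ) • x) := by
      rw [one_smul]; exact hf.hasFDerivAt
    exact hf'.comp_hasDerivAt (1 : ℝ) hline
  have h2 : HasDerivAt (fun t : ℝ => t ^ k * f x) (k * f x) 1 := by
    simpa using (hasDerivAt_pow k (1 : ℝ)).mul_const (f x)
  exact h1.unique (h2.congr_of_eventuallyEq (.of_forall hhom))

lemma fderiv_real_comp_apply {E : Type*} [NormedAddCommGroup E] [NormedSpace ℝ E]
    {φ : ℝ → ℝ} {f : E → ℝ} {x : E} (hφ : DifferentiableAt ℝ φ (f x))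
    (hf : DifferentiableAt ℝ f x) (v : E) :
    fderiv ℝ (fun y => φ (f y)) x v = deriv φ (f x) * fderiv ℝ f x v := by
  rw [show (fun y => φ (f y)) = φ ∘ f from rfl,
    (hφ.hasDerivAt.comp_hasFDerivAt x hf.hasFDerivAt).fderiv]
  rfl

lemma sum_smul_ne_zero_of_apply_neg {ι E : Type*} [AddCommGroup E] [Module ℝ E]
    [TopologicalSpace E] {s : Finset ι} {c : ι → ℝ} {φ : ι → E →L[ℝ] ℝ} {x : E}
    (hc : ∀ j ∈ s, 0 < c j) (hφ : ∀ j ∈ s, φ j x ≤ 0) (hneg : ∃ j ∈ s, φ j x < 0) :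
    ∑ j ∈ s, c j • φ j ≠ 0 := by
  intro h
  have hx : ∑ j ∈ s, c j * φ j x = 0 := by
    simpa using congrArg (fun T : E →L[ℝ] ℝ => T x) h
  obtain ⟨j₀, hj₀, hj₀neg⟩ := hneg
  refine (sum_lt_sum (g := 0) (fun j hj => mul_nonpos_of_nonneg_of_nonpos (hc j hj).le (hφ j hj))
    ⟨j₀, hj₀, mul_neg_of_pos_of_neg (hc j₀ hj₀) hj₀neg⟩).ne ?_
  rw [hx, Pi.zero_def, sum_const_zero]

section Distance

variable {n m : ℕ} {p : Fin n → Fin m → ℝ}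

lemma dsq_nonneg (p : Fin n → Fin m → ℝ) (i j : Fin n) : 0 ≤ dsq p i j :=
  sum_nonneg fun _ _ => sq_nonneg _

lemma dsq_comm (p : Fin n → Fin m → ℝ) (i j : Fin n) : dsq p i j = dsq p j i := by
  simp only [dsq, ← neg_sub (p j _), neg_sq]

lemma dsq_eq_zero_iff {i j : Fin n} : dsq p i j = 0 ↔ p i = p j := by
  rw [dsq, sum_eq_zero_iff_of_nonneg fun _ _ => sq_nonneg _, funext_iff]
  simp [sub_eq_zero]

lemma dsq_congr_left {i i' : Fin n} (h : p i = p i') (j : Fin n) : dsq p i j = dsq p i' j := by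
  simp only [dsq, h]

lemma dsq_smul (t : ℝ) (i j : Fin n) : dsq (t • p) i j = t ^ 2 * dsq p i j := by
  simp only [dsq, mul_sum, Pi.smul_apply, smul_eq_mul]
  exact sum_congr rfl fun _ _ => by ring

lemma differentiable_dsq (i j : Fin n) :
    Differentiable ℝ (fun p : Fin n → Fin m → ℝ => dsq p i j) := by
  unfold dsq
  fun_prop

lemma fderiv_dsq_apply_self (i j : Fin n) :
    fderiv ℝ (fun p' => dsq p' i j) p p = 2 * dsq p i j := by
  exact_mod_cast fderiv_apply_self_of_homogeneous (differentiable_dsq i j p) (dsq_smul · i j)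

end Distance

section Graph

variable {R : ℝ} {n m : ℕ} {p : Fin n → Fin m → ℝ}

lemma dsq_lt_of_commGraph_adj {i j : Fin n} (h : (commGraph R p).Adj i j) :
    dsq p i j < R ^ 2 := by
  rw [commGraph, SimpleGraph.fromRel_adj] at h
  exact h.2.elim id fun h' => dsq_comm p i j ▸ h'

lemma exists_dsq_pos_lt_of_connected (hconn : (commGraph R p).Connected) {x y : Fin n}
    (hxy : p x ≠ p y) : ∃ z, 0 < dsq p x z ∧ dsq p x z < R ^ 2 := by
  obtain ⟨walk⟩ := hconn.preconnected x y
  obtain ⟨d, -, hfst, hsnd⟩ := walk.exists_boundary_dart {z | p z = p x} rfl (Ne.symm hxy)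
  refine ⟨d.snd, ?_, ?_⟩ <;> rw [← dsq_congr_left hfst]
  · exact (dsq_nonneg p _ _).lt_of_ne fun h => hsnd (hfst ▸ (dsq_eq_zero_iff.1 h.symm).symm)
  · exact dsq_lt_of_commGraph_adj d.adj

lemma IsExtremeAgent.apply_ne {I : Fin n} {b : Fin m} (h : IsExtremeAgent p I b) {j : Fin n}
    (hj : j ≠ I) : p j ≠ p I := fun he => by
  rcases h with h | h
  · exact (h j hj).ne (congrFun he b)
  · exact (h j hj).ne' (congrFun he b)

lemma IsExtremeAgent.exists_apply_ne {I : Fin n} {b : Fin m} (h : IsExtremeAgent p I b)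
    (hn : 1 < n) (x : Fin n) : ∃ y, p x ≠ p y := by
  by_cases hx : x = I
  · have : Nontrivial (Fin n) := Fin.nontrivial_iff_two_le.2 hn
    obtain ⟨y, hy⟩ := exists_ne x
    exact ⟨y, hx ▸ (h.apply_ne (hx ▸ hy)).symm⟩
  · exact ⟨I, h.apply_ne hx⟩

end Graph

/-- `\bar a_{ij}` as a function of `Δ_{ij}²`; since `σ(0) = 0` it extends by `0` beyond the
cut-off `Δ_{ij} = R` as a `C¹` function. -/
noncomputable def adjProfile (sA qA R x : ℝ) : ℝ :=
  sigmaFn sA qA (max (R ^ 2 - x) 0 ^ 3)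

section Adjacency

variable {sA qA R : ℝ} {n m : ℕ} {p : Fin n → Fin m → ℝ}

lemma hasDerivAt_adjProfile (hqA : 0 < qA) (x : ℝ) :
    HasDerivAt (adjProfile sA qA R)
      (deriv (sigmaFn sA qA) (max (R ^ 2 - x) 0 ^ 3) * (3 * max (R ^ 2 - x) 0 ^ 2 * -1)) x :=
  (differentiable_sigmaFn hqA _).hasDerivAt.comp x
    ((hasDerivAt_max_zero_pow_three _).comp x ((hasDerivAt_id x).const_sub _))

lemma deriv_adjProfile_nonpos (hsA : 0 < sA) (hqA : 0 < qA) (x : ℝ) :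
    deriv (adjProfile sA qA R) x ≤ 0 := by
  rw [(hasDerivAt_adjProfile hqA x).deriv, mul_neg_one, mul_neg]
  exact neg_nonpos.2 (mul_nonneg (deriv_sigmaFn_pos hsA hqA _).le (by positivity))

lemma deriv_adjProfile_neg (hsA : 0 < sA) (hqA : 0 < qA) {x : ℝ} (hx : x < R ^ 2) :
    deriv (adjProfile sA qA R) x < 0 := by
  have hpos : 0 < max (R ^ 2 - x) 0 := lt_max_of_lt_left (sub_pos.2 hx)
  rw [(hasDerivAt_adjProfile hqA x).deriv, mul_neg_one, mul_neg]
  exact neg_neg_of_pos (mul_pos (deriv_sigmaFn_pos hsA hqA _) (by positivity))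

lemma barAdj_self (p : Fin n → Fin m → ℝ) (i : Fin n) : barAdj sA qA R p i i = 0 := by
  simp [barAdj]

lemma barAdj_of_ne (hqA : 0 < qA) (p : Fin n → Fin m → ℝ) {i j : Fin n} (hij : i ≠ j) :
    barAdj sA qA R p i j = adjProfile sA qA R (dsq p i j) := by
  unfold barAdj adjProfile
  split_ifs with h
  · rw [max_eq_left (sub_pos.2 h.2).le]
  · rw [max_eq_right (sub_nonpos.2 (not_lt.1 fun h' => h ⟨hij, h'⟩)), zero_pow three_ne_zero,
      sigmaFn_zero hqA]

lemma barAdj_nonneg (hsA : 0 < sA) (hqA : 0 < qA) (p : Fin n → Fin m → ℝ) (i j : Fin n) :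
    0 ≤ barAdj sA qA R p i j := by
  unfold barAdj
  split_ifs with h
  · exact sigmaFn_nonneg hsA hqA (pow_nonneg (sub_pos.2 h.2).le 3)
  · exact le_rfl

lemma dsq_lt_of_barAdj_pos {i j : Fin n} (h : 0 < barAdj sA qA R p i j) :
    dsq p i j < R ^ 2 := by
  unfold barAdj at h
  split_ifs at h with hij
  · exact hij.2
  · exact absurd h (lt_irrefl 0)

lemma differentiable_barAdj (hqA : 0 < qA) (i j : Fin n) :
    Differentiable ℝ (fun p : Fin n → Fin m → ℝ => barAdj sA qA R p i j) := by
  rcases eq_or_ne i j with rfl | hij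
  · simp only [barAdj_self]
    exact differentiable_const 0
  · simp only [barAdj_of_ne hqA _ hij]
    exact fun p => (hasDerivAt_adjProfile hqA _).differentiableAt.comp p
      (differentiable_dsq i j p)

lemma fderiv_barAdj_apply_self_nonpos (hsA : 0 < sA) (hqA : 0 < qA) (i j : Fin n) :
    fderiv ℝ (fun p' => barAdj sA qA R p' i j) p p ≤ 0 := by
  rcases eq_or_ne i j with rfl | hij
  · simp [barAdj_self]
  · simp only [barAdj_of_ne hqA _ hij]
    rw [fderiv_real_comp_apply (hasDerivAt_adjProfile hqA _).differentiableAt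
      (differentiable_dsq i j p), fderiv_dsq_apply_self]
    exact mul_nonpos_of_nonpos_of_nonneg (deriv_adjProfile_nonpos hsA hqA _)
      (by linarith [dsq_nonneg p i j])

lemma fderiv_barAdj_apply_self_neg (hsA : 0 < sA) (hqA : 0 < qA) {i j : Fin n}
    (hpos : 0 < dsq p i j) (hlt : dsq p i j < R ^ 2) :
    fderiv ℝ (fun p' => barAdj sA qA R p' i j) p p < 0 := by
  have hij : i ≠ j := by
    rintro rfl
    simp [dsq] at hpos
  simp only [barAdj_of_ne hqA _ hij]
  rw [fderiv_real_comp_apply (hasDerivAt_adjProfile hqA _).differentiableAt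
    (differentiable_dsq i j p), fderiv_dsq_apply_self]
  exact mul_neg_of_neg_of_pos (deriv_adjProfile_neg hsA hqA hlt) (by linarith)

end Adjacency

section Percolation

variable {s q sA qA R : ℝ} {l r : ℕ} {n m : ℕ} {p : Fin n → Fin m → ℝ}

lemma piBar_of_lt {j : Fin n} (hj : (j : ℕ) < l) (k : ℕ) :
    piBar s q sA qA R l r k p j = 1 := by
  cases k <;> simp [piBar, hj]

lemma piBar_succ_of_le {j : Fin n} (hj : l ≤ (j : ℕ)) (k : ℕ) (p : Fin n → Fin m → ℝ) :
    piBar s q sA qA R l r (k + 1) p j =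
      sigmaFn s q ((∑ i, barAdj sA qA R p i j * piBar s q sA qA R l r k p i) - r) := by
  simp [piBar, hj]

lemma piBar_zero_nonneg (i : Fin n) : 0 ≤ piBar s q sA qA R l r 0 p i := by
  unfold piBar
  split_ifs <;> norm_num

lemma differentiable_piBar (hq : 0 < q) (hqA : 0 < qA) (k : ℕ) (j : Fin n) :
    Differentiable ℝ (fun p : Fin n → Fin m → ℝ => piBar s q sA qA R l r k p j) := by
  induction k generalizing j with
  | zero => exact differentiable_const _
  | succ k ih =>
    rcases lt_or_ge (j : ℕ) l with hj | hj
    · simp only [piBar_of_lt hj]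
      exact differentiable_const 1
    · simp only [piBar_succ_of_le hj]
      exact (differentiable_sigmaFn hq).comp
        ((Differentiable.fun_sum fun i _ => (differentiable_barAdj hqA i j).mul (ih i)).sub_const _)

lemma fderiv_piBar_succ_apply_self (hq : 0 < q) (hqA : 0 < qA) {j : Fin n} (hj : l ≤ (j : ℕ))
    (k : ℕ) :
    fderiv ℝ (fun p' => piBar s q sA qA R l r (k + 1) p' j) p p =
      deriv (sigmaFn s q) ((∑ i, barAdj sA qA R p i j * piBar s q sA qA R l r k p i) - r) *
        ∑ i, (barAdj sA qA R p i j * fderiv ℝ (fun p' => piBar s q sA qA R l r k p' i) p p +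
          piBar s q sA qA R l r k p i * fderiv ℝ (fun p' => barAdj sA qA R p' i j) p p) := by
  have hterm (i : Fin n) : DifferentiableAt ℝ
      (fun p' => barAdj sA qA R p' i j * piBar s q sA qA R l r k p' i) p :=
    (differentiable_barAdj hqA i j p).fun_mul (differentiable_piBar hq hqA k i p)
  simp only [piBar_succ_of_le hj]
  rw [fderiv_real_comp_apply (differentiable_sigmaFn hq _)
      ((DifferentiableAt.fun_sum fun i _ => hterm i).sub_const _),
    fderiv_sub_const, fderiv_fun_sum fun i _ => hterm i]
  simp only [_root_.sum_apply]
  congr 1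
  refine sum_congr rfl fun i _ => ?_
  rw [fderiv_fun_mul (differentiable_barAdj hqA i j p) (differentiable_piBar hq hqA k i p)]
  rfl

lemma fderiv_piBar_apply_self_nonpos (hs : 0 < s) (hq : 0 < q) (hsA : 0 < sA) (hqA : 0 < qA)
    {k : ℕ} (hnn : ∀ k' < k, ∀ i, 0 ≤ piBar s q sA qA R l r k' p i) (j : Fin n) :
    fderiv ℝ (fun p' => piBar s q sA qA R l r k p' j) p p ≤ 0 := by
  induction k generalizing j with
  | zero => simp [piBar]
  | succ k ih =>
    rcases lt_or_ge (j : ℕ) l with hj | hj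
    · simp [piBar_of_lt hj]
    · rw [fderiv_piBar_succ_apply_self hq hqA hj]
      refine mul_nonpos_of_nonneg_of_nonpos (deriv_sigmaFn_pos hs hq _).le
        (sum_nonpos fun i _ => add_nonpos ?_ ?_)
      · exact mul_nonpos_of_nonneg_of_nonpos (barAdj_nonneg hsA hqA p i j)
          (ih (fun k' hk' => hnn k' (by omega)) i)
      · exact mul_nonpos_of_nonneg_of_nonpos (hnn k (by omega) i)
          (fderiv_barAdj_apply_self_nonpos hsA hqA i j)

lemma fderiv_piBar_succ_apply_self_neg (hs : 0 < s) (hq : 0 < q) (hsA : 0 < sA) (hqA : 0 < qA)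
    {k : ℕ} (hnn : ∀ k' ≤ k, ∀ i, 0 ≤ piBar s q sA qA R l r k' p i) {i j : Fin n}
    (hj : l ≤ (j : ℕ)) (hi : 0 < piBar s q sA qA R l r k p i) (hpos : 0 < dsq p i j)
    (hlt : dsq p i j < R ^ 2) :
    fderiv ℝ (fun p' => piBar s q sA qA R l r (k + 1) p' j) p p < 0 := by
  rw [fderiv_piBar_succ_apply_self hq hqA hj]
  refine mul_neg_of_pos_of_neg (deriv_sigmaFn_pos hs hq _) ?_
  refine (sum_lt_sum (g := 0) (fun i' _ => add_nonpos ?_ ?_) ⟨i, mem_univ i, ?_⟩).trans_eq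
    sum_const_zero
  · exact mul_nonpos_of_nonneg_of_nonpos (barAdj_nonneg hsA hqA p i' j)
      (fderiv_piBar_apply_self_nonpos hs hq hsA hqA (fun k' hk' => hnn k' hk'.le) i')
  · exact mul_nonpos_of_nonneg_of_nonpos (hnn k le_rfl i')
      (fderiv_barAdj_apply_self_nonpos hsA hqA i' j)
  · exact add_neg_of_nonpos_of_neg
      (mul_nonpos_of_nonneg_of_nonpos (barAdj_nonneg hsA hqA p i j)
        (fderiv_piBar_apply_self_nonpos hs hq hsA hqA (fun k' hk' => hnn k' hk'.le) i))
      (mul_neg_of_pos_of_neg hi (fderiv_barAdj_apply_self_neg hsA hqA hpos hlt))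

lemma exists_barAdj_pos_of_piBar_succ_pos (hs : 0 < s) (hq : 0 < q) (hsA : 0 < sA)
    (hqA : 0 < qA) {k : ℕ} (hnn : ∀ i, 0 ≤ piBar s q sA qA R l r k p i) {j : Fin n}
    (hj : l ≤ (j : ℕ)) (h : 0 < piBar s q sA qA R l r (k + 1) p j) :
    ∃ i, 0 < barAdj sA qA R p i j ∧ 0 < piBar s q sA qA R l r k p i := by
  rw [piBar_succ_of_le hj] at h
  have hsum : ∑ _i : Fin n, (0 : ℝ) <
      ∑ i, barAdj sA qA R p i j * piBar s q sA qA R l r k p i := by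
    rw [sum_const_zero]
    linarith [pos_of_sigmaFn_pos hs hq h, (r.cast_nonneg : (0 : ℝ) ≤ r)]
  obtain ⟨i, -, hi⟩ := exists_lt_of_sum_lt hsum
  exact ⟨i, pos_of_mul_pos_left hi (hnn i),
    pos_of_mul_pos_right hi (barAdj_nonneg hsA hqA p i j)⟩

lemma piBar_nonneg_of_safe {ε : ℝ} {δ : ℕ} (hε : 0 ≤ ε)
    (hsafe : ∀ j : Fin n, l ≤ (j : ℕ) → ∀ k : ℕ, 1 ≤ k → k ≤ δ →
      ε < piBar s q sA qA R l r k p j)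
    {k : ℕ} (hk : k ≤ δ) (i : Fin n) : 0 ≤ piBar s q sA qA R l r k p i := by
  rcases k with _ | k
  · exact piBar_zero_nonneg i
  rcases lt_or_ge (i : ℕ) l with hi | hi
  · rw [piBar_of_lt hi]
    exact zero_le_one
  · exact hε.trans (hsafe i hi (k + 1) (by omega) hk).le

lemma exists_follower_with_active_neighbor (hs : 0 < s) (hq : 0 < q) (hsA : 0 < sA)
    (hqA : 0 < qA) {k : ℕ}
    (hnn : ∀ i, 0 ≤ piBar s q sA qA R l r k p i)
    (hpos : ∀ j : Fin n, l ≤ (j : ℕ) → 0 < piBar s q sA qA R l r (k + 1) p j)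
    {j₀ z : Fin n} (hj₀ : l ≤ (j₀ : ℕ)) (hz : 0 < dsq p j₀ z)
    (hzR : dsq p j₀ z < R ^ 2) :
    ∃ i j : Fin n, l ≤ (j : ℕ) ∧ 0 < piBar s q sA qA R l r k p i ∧
      0 < dsq p i j ∧ dsq p i j < R ^ 2 := by
  rcases (hnn z).lt_or_eq with hz_act | hz_inact
  · exact ⟨z, j₀, hj₀, hz_act, dsq_comm p j₀ z ▸ hz, dsq_comm p j₀ z ▸ hzR⟩
  have hzf : l ≤ (z : ℕ) := by
    by_contra hzl
    rw [piBar_of_lt (not_le.1 hzl)] at hz_inact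
    exact zero_ne_one hz_inact
  obtain ⟨i, hai, hi⟩ := exists_barAdj_pos_of_piBar_succ_pos hs hq hsA hqA hnn hzf (hpos z hzf)
  have hiR := dsq_lt_of_barAdj_pos hai
  rcases (dsq_nonneg p i z).lt_or_eq with hiz | hiz
  · exact ⟨i, z, hzf, hi, hiz, hiR⟩
  -- `i` sits on top of `z`, so it sees `j₀` at the same positive distance as `z` does.
  have hij₀ : dsq p i j₀ = dsq p j₀ z :=
    (dsq_congr_left (dsq_eq_zero_iff.1 hiz.symm) j₀).trans (dsq_comm p z j₀)
  exact ⟨i, j₀, hj₀, hi, hij₀ ▸ hz, hij₀ ▸ hzR⟩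

end Percolation

theorem stmt_17_general {n m : ℕ} (l r δ : ℕ) (hl : 0 < l) (hδ1 : 1 ≤ δ) (hδf : δ ≤ n - l)
    (R s q sA qA ε : ℝ) (hs : 0 < s) (hq0 : 0 < q)
    (hsA : 0 < sA) (hqA0 : 0 < qA) (hε : 0 < ε)
    (p : Fin n → Fin m → ℝ)
    (hconn : (commGraph R p).Connected)
    (hext : ∃ I : Fin n, ∃ b : Fin m, IsExtremeAgent p I b)
    (hsafe : ∀ j : Fin n, l ≤ (j : ℕ) → ∀ k : ℕ, 1 ≤ k → k ≤ δ →
      ε < piBar s q sA qA R l r k p j)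
    (w η : Fin n → ℝ) (hw : ∀ j : Fin n, l ≤ (j : ℕ) → 0 < w j)
    (v : Fin n → Fin m → ℝ) :
    ∑ j ∈ Finset.univ.filter (fun j : Fin n => l ≤ (j : ℕ)),
      (w j * Real.exp (-(w j * (fderiv ℝ (hBarrier s q sA qA R ε l r δ j) p v +
          η j * hBarrier s q sA qA R ε l r δ j p)))) •
        fderiv ℝ (hBarrier s q sA qA R ε l r δ j) p ≠ 0 := by
  obtain ⟨k, rfl⟩ : ∃ k, δ = k + 1 := ⟨δ - 1, by omega⟩
  have hnn (k') (hk' : k' ≤ k + 1) := piBar_nonneg_of_safe hε.le hsafe hk'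
  have hpos (j : Fin n) (hj : l ≤ (j : ℕ)) : 0 < piBar s q sA qA R l r (k + 1) p j :=
    hε.trans (hsafe j hj (k + 1) (by omega) le_rfl)
  obtain ⟨I, b, hI⟩ := hext
  let j₀ : Fin n := ⟨l, by omega⟩
  obtain ⟨y, hy⟩ := hI.exists_apply_ne (by omega) j₀
  obtain ⟨z, hz, hzR⟩ := exists_dsq_pos_lt_of_connected hconn hy
  obtain ⟨i, jf, hjf, hi, hijf, hijfR⟩ := exists_follower_with_active_neighbor hs hq0 hsA hqA0
    (hnn k k.le_succ) hpos (j₀ := j₀) le_rfl hz hzR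
  have hfderiv (j : Fin n) : fderiv ℝ (hBarrier s q sA qA R ε l r (k + 1) j) p =
      fderiv ℝ (fun p' => piBar s q sA qA R l r (k + 1) p' j) p :=
    fderiv_sub_const ε
  simp only [hfderiv]
  refine sum_smul_ne_zero_of_apply_neg (x := p)
    (fun j hj => mul_pos (hw j (mem_filter.1 hj).2) (exp_pos _))
    (fun j _ => fderiv_piBar_apply_self_nonpos hs hq0 hsA hqA0 (fun k' hk' => hnn k' hk'.le) j)
    ⟨jf, mem_filter.2 ⟨mem_univ _, hjf⟩, ?_⟩
  exact fderiv_piBar_succ_apply_self_neg hs hq0 hsA hqA0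
    (fun k' hk' => hnn k' (hk'.trans k.le_succ)) hjf hi hijf hijfR

theorem stmt_17 {n m : ℕ} (l r δ : ℕ) (hl : 0 < l) (hln : l ≤ n) (hr : 0 < r)
    (hδ1 : 1 ≤ δ) (hδf : δ ≤ n - l)
    (R s q sA qA ε : ℝ) (hR : 0 < R) (hs : 0 < s) (hq0 : 0 < q) (hq1 : q < 1)
    (hsA : 0 < sA) (hqA0 : 0 < qA) (hqA1 : qA < 1) (hε : 0 < ε)
    (p : Fin n → Fin m → ℝ)
    (hconn : (commGraph R p).Connected)
    (hext : ∃ I : Fin n, ∃ b : Fin m, IsExtremeAgent p I b)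
    (hsafe : ∀ j : Fin n, l ≤ (j : ℕ) → ∀ k : ℕ, 1 ≤ k → k ≤ δ →
      ε < piBar s q sA qA R l r k p j)
    (w η : Fin n → ℝ) (hw : ∀ j : Fin n, l ≤ (j : ℕ) → 0 < w j)
    (hη : ∀ j : Fin n, l ≤ (j : ℕ) → 0 < η j)
    (v : Fin n → Fin m → ℝ) :
    ∑ j ∈ Finset.univ.filter (fun j : Fin n => l ≤ (j : ℕ)),
      (w j * Real.exp (-(w j * (fderiv ℝ (hBarrier s q sA qA R ε l r δ j) p v +
          η j * hBarrier s q sA qA R ε l r δ j p)))) •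
        fderiv ℝ (hBarrier s q sA qA R ε l r δ j) p ≠ 0 :=
  stmt_17_general l r δ hl hδ1 hδf R s q sA qA ε hs hq0 hsA hqA0 hε p hconn hext hsafe w η hw v
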